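/- Let u : ℕ → ℝ be a sequence and p ≥ 1 an index that is not a strict local extremum, i.e. u(p−1) ≤ u(p) ≤ u(p+1) or u(p−1) ≥ u(p) ≥ u(p+1). Let u' be the sequence obtained from u by deleting position p (u'(j) = u(j) for j < p and u'(j) = u(j+1) for j ≥ p). Then for all real thresholds α > β and all n ≥ p+1, R_{α,β}[u](n) = R_{α,β}[u'](n−1): deleting a non-extremal point does not change any relay state at later times (the extremum stack is a sufficient statistic for all relays). -/

import Mathlib

/-!
If `u p` lies between `u (p - 1)` and `u (p + 1)`, then any threshold crossed by `u p` is either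
already crossed by `u (p - 1)`, so the relay is already in the state `u p` would set, or crossed
again by `u (p + 1)`, which overwrites the state. Hence the relay state after time `p + 1` is the
same with or without the input `u p`, and from then on both inputs coincide.
-/

open Set

/-- The elementary relay `R_{α,β}` of Preisach hysteresis theory. -/
noncomputable def relay (α β : ℝ) (u : ℕ → ℝ) : ℕ → ℝ
  | 0 => if u 0 ≥ α then 1 else 0
  | n + 1 => if u (n + 1) ≥ α then 1 else if u (n + 1) ≤ β then 0 else relay α β u n

noncomputable def relayStep (α β x s : ℝ) : ℝ :=
  if x ≥ α then 1 else if x ≤ β then 0 else s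

section

variable {α β : ℝ} {u v : ℕ → ℝ}

lemma relay_succ (n : ℕ) : relay α β u (n + 1) = relayStep α β (u (n + 1)) (relay α β u n) :=
  rfl

lemma relay_eq_one_of_le {n : ℕ} (h : α ≤ u n) : relay α β u n = 1 := by
  cases n <;> simp [relay, h]

lemma relay_eq_zero_of_le (hαβ : β < α) {n : ℕ} (h : u n ≤ β) : relay α β u n = 0 := by
  have : ¬ α ≤ u n := by linarith
  cases n <;> simp [relay, h, this]

lemma relay_congr {n : ℕ} (h : ∀ i ≤ n, u i = v i) : relay α β u n = relay α β v n := by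
  induction n with
  | zero => simp [relay, h 0 le_rfl]
  | succ n ih => rw [relay_succ, relay_succ, h (n + 1) le_rfl, ih fun i hi => h i (by omega)]

lemma relay_add_eq_of_eq {a b : ℕ} (h₀ : relay α β u a = relay α β v b)
    (h : ∀ k, u (a + k + 1) = v (b + k + 1)) (k : ℕ) :
    relay α β u (a + k) = relay α β v (b + k) := by
  induction k with
  | zero => exact h₀
  | succ k ih => rw [← add_assoc, ← add_assoc, relay_succ, relay_succ, ih, h]

lemma relayStep_relayStep_of_mem_uIcc {s x y z : ℝ} (hs₁ : α ≤ x → s = 1) (hs₀ : x ≤ β → s = 0)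
    (hy : y ∈ uIcc x z) : relayStep α β z (relayStep α β y s) = relayStep α β z s := by
  unfold relayStep
  rcases mem_uIcc.mp hy with ⟨hxy, hyz⟩ | ⟨hzy, hyx⟩ <;> split_ifs <;>
    first | rfl | linarith | exact (hs₁ (by linarith)).symm | exact (hs₀ (by linarith)).symm

end

/-- Deleting a non-extremal point of the input does not change any relay state at later
times: the extremum stack is a sufficient statistic for all relays. -/
theorem relay_delete_nonextremal (u : ℕ → ℝ) (p : ℕ) (hp : 1 ≤ p)
    (hnonext : (u (p - 1) ≤ u p ∧ u p ≤ u (p + 1)) ∨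
               (u (p - 1) ≥ u p ∧ u p ≥ u (p + 1))) :
    ∀ α β : ℝ, α > β → ∀ n, p + 1 ≤ n →
      relay α β u n = relay α β (fun j => if j < p then u j else u (j + 1)) (n - 1) := by
  intro α β hαβ n hn
  set v : ℕ → ℝ := fun j => if j < p then u j else u (j + 1)
  obtain ⟨q, rfl⟩ : ∃ q, p = q + 1 := ⟨p - 1, by omega⟩
  obtain ⟨k, rfl⟩ := Nat.exists_eq_add_of_le hn
  have hvu : ∀ i ≤ q, u i = v i := fun i hi => (if_pos (Nat.lt_succ_of_le hi)).symm
  have hvtail : ∀ i, q + 1 ≤ i → v i = u (i + 1) := fun i hi => if_neg (by omega)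
  have hbetween : u (q + 1) ∈ uIcc (u q) (u (q + 1 + 1)) := by
    simp only [Nat.add_sub_cancel] at hnonext
    exact mem_uIcc.mpr (hnonext.imp id fun h => ⟨h.2, h.1⟩)
  have hstate : relay α β u (q + 1 + 1) = relay α β v (q + 1) := by
    rw [relay_succ, relay_succ, relay_succ, ← relay_congr hvu, hvtail (q + 1) le_rfl]
    exact relayStep_relayStep_of_mem_uIcc relay_eq_one_of_le (relay_eq_zero_of_le hαβ) hbetween
  rw [show q + 1 + 1 + k - 1 = q + 1 + k by omega]
  refine relay_add_eq_of_eq hstate (fun i => ?_) k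
  rw [hvtail _ (by omega)]
  congr 1
  omega
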